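/- Equality H(X|Y) = H(W) in the previous inequality holds if P_{X|Y}(w|0) = P_{X|Y}(1+w|1) for all w ∈ F_2 (i.e., the channel noise is additive/symmetric). -/
import Mathlib


/-- Equality `H(X|Y) = H(W)` holds if the channel noise is additive,
i.e. `P_{X|Y}(w|0) = P_{X|Y}(1+w|1)` for all `w ∈ F₂`. -/
theorem conditional_entropy_eq_entropy_of_error_of_additive
    (P : ZMod 2 → ZMod 2 → ℝ)
    (hPnonneg : ∀ x y, 0 ≤ P x y)
    (hPsum : ∑ x : ZMod 2, ∑ y : ZMod 2, P x y = 1)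
    (PY : ZMod 2 → ℝ) (hPY : ∀ y, PY y = ∑ x : ZMod 2, P x y)
    (hPYpos : ∀ y, 0 < PY y)
    (PW : ZMod 2 → ℝ) (hPW : ∀ w, PW w = ∑ y : ZMod 2, P (y + w) y)
    (hadd : ∀ w : ZMod 2, P w 0 / PY 0 = P (1 + w) 1 / PY 1) :
    -∑ x : ZMod 2, ∑ y : ZMod 2, P x y * Real.logb 2 (P x y / PY y)
      = -∑ w : ZMod 2, PW w * Real.logb 2 (PW w) := by
  have S : ∀ f : ZMod 2 → ℝ, ∑ x : ZMod 2, f x = f 0 + f 1 := by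
    intro f
    rw [show (Finset.univ : Finset (ZMod 2)) = {0, 1} by decide]
    simp
  have e10 : (1 : ZMod 2) + 0 = 1 := by decide
  have e11 : (1 : ZMod 2) + 1 = 0 := by decide
  have e01 : (0 : ZMod 2) + 1 = 1 := by decide
  have e00 : (0 : ZMod 2) + 0 = 0 := by decide
  have hp0 := hPYpos 0
  have hp1 := hPYpos 1
  have hp0' : PY 0 ≠ 0 := ne_of_gt hp0
  have hp1' : PY 1 ≠ 0 := ne_of_gt hp1
  have hsum1 : PY 0 + PY 1 = 1 := by
    rw [hPY 0, hPY 1, S, S, ← hPsum, S (fun x => ∑ y : ZMod 2, P x y), S (P 0), S (P 1)]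
    ring
  have hadd0 := hadd 0
  have hadd1 := hadd 1
  rw [e10] at hadd0
  rw [e11] at hadd1
  have key : ∀ u v : ℝ, u / PY 0 = v / PY 1 → u / PY 0 = u + v := by
    intro u v h
    have h' : u * PY 1 = v * PY 0 := by
      field_simp at h; linarith [h]
    rw [div_eq_iff hp0']
    linear_combination h' - u * hsum1
  have k1 : P 0 0 / PY 0 = P 0 0 + P 1 1 := key _ _ hadd0
  have k1' : P 1 1 / PY 1 = P 0 0 + P 1 1 := by rw [← hadd0]; exact k1
  have k2 : P 1 0 / PY 0 = P 1 0 + P 0 1 := key _ _ hadd1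
  have k2' : P 0 1 / PY 1 = P 1 0 + P 0 1 := by rw [← hadd1]; exact k2
  have hPW0 : PW 0 = P 0 0 + P 1 1 := by rw [hPW 0, S (fun y => P (y + 0) y), e00, e10]
  have hPW1 : PW 1 = P 1 0 + P 0 1 := by rw [hPW 1, S (fun y => P (y + 1) y), e01, e11]
  rw [S (fun x => ∑ y : ZMod 2, P x y * Real.logb 2 (P x y / PY y)),
      S (fun y => P 0 y * Real.logb 2 (P 0 y / PY y)),
      S (fun y => P 1 y * Real.logb 2 (P 1 y / PY y)),
      S (fun w => PW w * Real.logb 2 (PW w))]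
  rw [k1, k1', k2, k2', hPW0, hPW1]
  ring
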